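/- Let R be a finite subset of (Fin n → ZMod 2), let w be a weight function with w(y) ∈ (0,1] for all y ∈ R, and write w(A) = Σ_{y∈A} w(y). Let κ ∈ (0,1), let pivot = ⌈e^{3/2}·(1 + 1/κ)²⌉, and let m ≥ 0 be an integer such that w(R) − 1 = 2^{m} · pivot and w(R) > 1 + (1+κ)·pivot. Then for every fixed α ∈ (Fin m → ZMod 2), if h is chosen uniformly at random from H_xor(n, m), then Pr[ pivot/(1+κ) ≤ w(R ∩ h^{-1}(α)) ≤ 1 + (1+κ)·pivot ] ≥ 1 − e^{-3/2}. -/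

import Mathlib

/-!
For a fixed input `y`, the hash value `h(y)` is uniform on `(ZMod 2)^m`, and for `y ≠ y'` the
pair `(h(y), h(y'))` is uniform on `((ZMod 2)^m)²`: both are surjective additive functions of the
coefficients, so all their fibres have the same size. Hence the cell weight
`X = w(R ∩ h⁻¹(α))` is a weighted sum of pairwise independent indicators, with mean
`μ = w(R)/2^m = pivot + 2^{-m}` and, since `w ≤ 1`, variance at most `μ`. The hypothesis
`w(R) > 1 + (1+κ)·pivot` forces `m ≥ 1`, and then the success interval contains `[μ - t, μ + t]`
for `t = κμ/(1+κ)`. By Chebyshev the failure probability is at most `μ/t² = (1+1/κ)²/μ`, which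
the choice of `pivot` makes at most `e^{-3/2}`.
-/

open scoped Classical

/-- The XOR hash family `H_xor(n, m)`: for coefficients
`a i = (a_{i,0}, (a_{i,1}, …, a_{i,n}))`, the hash of `y` has `i`-th component
`a_{i,0} + Σ_l a_{i,l}·y_l` over `ZMod 2`. -/
def hashXor (n m : ℕ) (a : Fin m → ZMod 2 × (Fin n → ZMod 2))
    (y : Fin n → ZMod 2) : Fin m → ZMod 2 :=
  fun j => (a j).1 + ∑ l, (a j).2 l * y l

open Finset

lemma AddMonoidHom.card_fiber_mul_card_of_surjective {G H : Type*} [AddGroup G] [Fintype G]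
    [AddMonoid H] [Fintype H] [DecidableEq H] (f : G →+ H) (hf : Function.Surjective f)
    (x : H) : #{g | f g = x} * Fintype.card H = Fintype.card G := by
  calc #{g | f g = x} * Fintype.card H = ∑ y : H, #{g | f g = y} := by
        rw [← card_univ, mul_comm, ← smul_eq_mul, ← sum_const]
        exact sum_congr rfl fun y _ => AddMonoidHom.card_fiber_eq_of_mem_range f (hf x) (hf y)
    _ = Fintype.card G := by
        rw [← card_univ, card_eq_sum_card_fiberwise (f := f) fun _ _ => mem_univ _]

def hashXorEval (n m : ℕ) (y : Fin n → ZMod 2) :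
    (Fin m → ZMod 2 × (Fin n → ZMod 2)) →+ (Fin m → ZMod 2) where
  toFun a := hashXor n m a y
  map_zero' := by ext; simp [hashXor]
  map_add' a b := by ext; simp [hashXor, add_mul, sum_add_distrib]; ring

lemma hashXorEval_surjective (n m : ℕ) (y : Fin n → ZMod 2) :
    Function.Surjective (hashXorEval n m y) :=
  fun β => ⟨fun j => (β j, 0), by ext; simp [hashXorEval, hashXor]⟩

lemma hashXorEval_prod_surjective (n m : ℕ) {y y' : Fin n → ZMod 2} (hyy' : y ≠ y') :
    Function.Surjective ((hashXorEval n m y).prod (hashXorEval n m y')) := by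
  obtain ⟨l, hl⟩ := Function.ne_iff.mp hyy'
  rintro ⟨β, γ⟩
  set δ : Fin m → ZMod 2 := fun j => (β j - γ j) * (y l - y' l)⁻¹
  refine ⟨fun j => (β j - δ j * y l, Pi.single l (δ j)), ?_⟩
  have hδ : ∀ j, δ j * (y l - y' l) = β j - γ j := fun j =>
    inv_mul_cancel_right₀ (sub_ne_zero.mpr hl) _
  clear_value δ
  ext j
  · simp [hashXorEval, hashXor, Pi.single_apply]
  · simp only [hashXorEval, AddMonoidHom.prod_apply, AddMonoidHom.coe_mk, ZeroHom.coe_mk,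
      hashXor, Pi.single_apply, ite_mul, zero_mul, sum_ite_eq', mem_univ, ↓reduceIte]
    linear_combination -hδ j

section PairwiseIndependent

variable {Ω ι : Type*} [Fintype Ω] (P : ι → Ω → Prop) [∀ i, DecidablePred (P i)]

lemma sum_boole_sub_mul_boole_sub_eq (p : ℝ) {i j : ι}
    (hi : (#{a | P i a} : ℝ) = p * Fintype.card Ω) (hj : (#{a | P j a} : ℝ) = p * Fintype.card Ω)
    (hij : (#{a | P i a ∧ P j a} : ℝ) = (if i = j then p else p ^ 2) * Fintype.card Ω) :
    ∑ a, ((if P i a then (1 : ℝ) else 0) - p) * ((if P j a then (1 : ℝ) else 0) - p) =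
      if i = j then p * (1 - p) * Fintype.card Ω else 0 := by
  have hexpand : ∀ a, ((if P i a then (1 : ℝ) else 0) - p) * ((if P j a then (1 : ℝ) else 0) - p) =
      (if P i a ∧ P j a then 1 else 0) - p * (if P i a then (1 : ℝ) else 0)
        - p * (if P j a then (1 : ℝ) else 0) + p ^ 2 := fun a => by
    split_ifs <;> simp_all <;> ring
  simp only [hexpand, sum_add_distrib, sum_sub_distrib, ← mul_sum, sum_boole, sum_const,
    card_univ, nsmul_eq_mul, hi, hj, hij]
  split_ifs <;> ring

theorem sum_sq_sub_eq_of_pairwise_indep (R : Finset ι) (w : ι → ℝ) (p : ℝ)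
    (h₁ : ∀ i ∈ R, (#{a | P i a} : ℝ) = p * Fintype.card Ω)
    (h₂ : ∀ i ∈ R, ∀ j ∈ R, i ≠ j → (#{a | P i a ∧ P j a} : ℝ) = p ^ 2 * Fintype.card Ω) :
    ∑ a, (∑ i ∈ R with P i a, w i - p * ∑ i ∈ R, w i) ^ 2 =
      p * (1 - p) * Fintype.card Ω * ∑ i ∈ R, w i ^ 2 := by
  have hcentered : ∀ a, ∑ i ∈ R with P i a, w i - p * ∑ i ∈ R, w i =
      ∑ i ∈ R, w i * ((if P i a then (1 : ℝ) else 0) - p) := fun a => by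
    simp only [sum_filter, mul_sub, mul_ite, mul_one, mul_zero, sum_sub_distrib, mul_sum, mul_comm]
  have hcov : ∀ i ∈ R, ∀ j ∈ R,
      ∑ a, ((if P i a then (1 : ℝ) else 0) - p) * ((if P j a then (1 : ℝ) else 0) - p) =
        if i = j then p * (1 - p) * Fintype.card Ω else 0 := fun i hi j hj => by
    refine sum_boole_sub_mul_boole_sub_eq P p (h₁ i hi) (h₁ j hj) ?_
    split_ifs with hij
    · subst hij; simpa using h₁ i hi
    · exact h₂ i hi j hj hij
  calc ∑ a, (∑ i ∈ R with P i a, w i - p * ∑ i ∈ R, w i) ^ 2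
      = ∑ i ∈ R, ∑ j ∈ R, w i * w j *
          ∑ a, ((if P i a then (1 : ℝ) else 0) - p) * ((if P j a then (1 : ℝ) else 0) - p) := by
        simp_rw [hcentered, sq, sum_mul_sum, mul_sum]
        rw [sum_comm]
        refine sum_congr rfl fun i _ => ?_
        rw [sum_comm]
        refine sum_congr rfl fun j _ => sum_congr rfl fun a _ => by ring
    _ = p * (1 - p) * Fintype.card Ω * ∑ i ∈ R, w i ^ 2 := by
        rw [mul_sum]
        refine sum_congr rfl fun i hi => ?_
        rw [sum_congr rfl fun j hj => congrArg (w i * w j * ·) (hcov i hi j hj)]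
        simp only [mul_ite, mul_zero, sum_ite_eq, if_pos hi]
        ring

end PairwiseIndependent

lemma card_filter_hashXor_eq (n m : ℕ) (y : Fin n → ZMod 2) (α : Fin m → ZMod 2) :
    (#{a | hashXor n m a y = α} : ℝ) =
      ((2 : ℝ) ^ m)⁻¹ * Fintype.card (Fin m → ZMod 2 × (Fin n → ZMod 2)) := by
  have h := (hashXorEval n m y).card_fiber_mul_card_of_surjective
    (hashXorEval_surjective n m y) α
  rw [← h]
  push_cast [Fintype.card_fun, ZMod.card, Fintype.card_fin]
  field_simp
  rfl

lemma card_filter_hashXor_eq_and_eq (n m : ℕ) {y y' : Fin n → ZMod 2} (hyy' : y ≠ y')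
    (α : Fin m → ZMod 2) :
    (#{a | hashXor n m a y = α ∧ hashXor n m a y' = α} : ℝ) =
      ((2 : ℝ) ^ m)⁻¹ ^ 2 * Fintype.card (Fin m → ZMod 2 × (Fin n → ZMod 2)) := by
  have h := ((hashXorEval n m y).prod (hashXorEval n m y')).card_fiber_mul_card_of_surjective
    (hashXorEval_prod_surjective n m hyy') (α, α)
  rw [← h]
  push_cast [Fintype.card_prod, Fintype.card_fun, ZMod.card, Fintype.card_fin]
  field_simp
  simp [hashXorEval, Prod.ext_iff]

def hashCellWeight {n m : ℕ} (R : Finset (Fin n → ZMod 2)) (w : (Fin n → ZMod 2) → ℝ)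
    (α : Fin m → ZMod 2) (a : Fin m → ZMod 2 × (Fin n → ZMod 2)) : ℝ :=
  ∑ z ∈ R with hashXor n m a z = α, w z

lemma sum_sq_hashCellWeight_sub_le {n m : ℕ} (R : Finset (Fin n → ZMod 2))
    (w : (Fin n → ZMod 2) → ℝ) (hw : ∀ z ∈ R, w z ∈ Set.Icc (0 : ℝ) 1) (α : Fin m → ZMod 2) :
    ∑ a, (hashCellWeight R w α a - ((2 : ℝ) ^ m)⁻¹ * ∑ z ∈ R, w z) ^ 2 ≤
      ((2 : ℝ) ^ m)⁻¹ * (∑ z ∈ R, w z) * Fintype.card (Fin m → ZMod 2 × (Fin n → ZMod 2)) := by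
  unfold hashCellWeight
  rw [sum_sq_sub_eq_of_pairwise_indep _ R w _
    (fun z _ => card_filter_hashXor_eq n m z α)
    fun z _ z' _ h => card_filter_hashXor_eq_and_eq n m h α]
  have hQ : ∑ z ∈ R, w z ^ 2 ≤ ∑ z ∈ R, w z :=
    sum_le_sum fun z hz => by obtain ⟨h0, h1⟩ := hw z hz; nlinarith
  have hp : (0 : ℝ) ≤ ((2 : ℝ) ^ m)⁻¹ := by positivity
  calc _ ≤ ((2 : ℝ) ^ m)⁻¹ * 1 * Fintype.card (Fin m → ZMod 2 × (Fin n → ZMod 2)) *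
        ∑ z ∈ R, w z := by
        gcongr
        linarith
    _ = _ := by ring

lemma div_sq_le_exp_neg_of_le {κ μ : ℝ} (hκ : 0 < κ)
    (hμ : Real.exp (3 / 2) * (1 + 1 / κ) ^ 2 ≤ μ) :
    μ / (κ * μ / (1 + κ)) ^ 2 ≤ Real.exp (-(3 / 2)) := by
  have hμ0 : 0 < μ := lt_of_lt_of_le (by positivity) hμ
  have h : μ / (κ * μ / (1 + κ)) ^ 2 = (1 + 1 / κ) ^ 2 / μ := by field_simp; ring
  rw [h, div_le_iff₀ hμ0, Real.exp_neg, inv_mul_eq_div, le_div_iff₀ (Real.exp_pos _), mul_comm]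
  exact hμ

section Chebyshev

variable {Ω : Type*} [Fintype Ω] (X : Ω → ℝ)

lemma card_filter_le_abs_sub_mul_sq_le (μ : ℝ) {t : ℝ} (ht : 0 ≤ t) :
    (#{a | t ≤ |X a - μ|} : ℝ) * t ^ 2 ≤ ∑ a, (X a - μ) ^ 2 := by
  calc (#{a | t ≤ |X a - μ|} : ℝ) * t ^ 2 ≤ ∑ a with t ≤ |X a - μ|, (X a - μ) ^ 2 := by
        rw [← nsmul_eq_mul]
        refine card_nsmul_le_sum _ _ _ fun a ha => ?_
        rw [← sq_abs (X a - μ)]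
        exact pow_le_pow_left₀ ht (mem_filter.mp ha).2 2
    _ ≤ ∑ a, (X a - μ) ^ 2 :=
        sum_le_sum_of_subset_of_nonneg (subset_univ _) fun a _ _ => sq_nonneg _

lemma one_sub_div_le_card_filter_div [Nonempty Ω] {μ t lo hi : ℝ} (ht : 0 < t)
    (hlo : lo ≤ μ - t) (hhi : μ + t ≤ hi) :
    1 - (∑ a, (X a - μ) ^ 2) / (t ^ 2 * Fintype.card Ω) ≤
      (#{a | lo ≤ X a ∧ X a ≤ hi} : ℝ) / Fintype.card Ω := by
  have hbad : #{a | ¬(lo ≤ X a ∧ X a ≤ hi)} ≤ #{a | t ≤ |X a - μ|} := by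
    refine card_le_card fun a ha => ?_
    simp only [mem_filter, mem_univ, true_and, not_and_or, not_le] at ha ⊢
    rcases ha with ha | ha
    · rw [abs_sub_comm, le_abs]; left; linarith
    · rw [le_abs]; left; linarith
  have hsplit := card_filter_add_card_filter_not (s := univ) fun a => lo ≤ X a ∧ X a ≤ hi
  rw [card_univ] at hsplit
  have hN : (0 : ℝ) < Fintype.card Ω := by exact_mod_cast Fintype.card_pos
  have hbad_le : (#{a | ¬(lo ≤ X a ∧ X a ≤ hi)} : ℝ) / Fintype.card Ω ≤
      (∑ a, (X a - μ) ^ 2) / (t ^ 2 * Fintype.card Ω) := by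
    rw [div_le_div_iff₀ hN (by positivity), ← mul_assoc]
    gcongr
    exact le_trans (by gcongr) (card_filter_le_abs_sub_mul_sq_le X μ ht.le)
  have hgood : (#{a | lo ≤ X a ∧ X a ≤ hi} : ℝ) / Fintype.card Ω =
      1 - (#{a | ¬(lo ≤ X a ∧ X a ≤ hi)} : ℝ) / Fintype.card Ω := by
    rw [eq_sub_iff_add_eq, ← add_div, ← Nat.cast_add, hsplit, div_self hN.ne']
  linarith

lemma one_sub_exp_le_card_filter_div [Nonempty Ω] {κ μ lo hi : ℝ} (hκ : 0 < κ)
    (hμ : Real.exp (3 / 2) * (1 + 1 / κ) ^ 2 ≤ μ)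
    (hvar : ∑ a, (X a - μ) ^ 2 ≤ μ * Fintype.card Ω)
    (hlo : lo ≤ μ - κ * μ / (1 + κ)) (hhi : μ + κ * μ / (1 + κ) ≤ hi) :
    1 - Real.exp (-(3 / 2)) ≤ (#{a | lo ≤ X a ∧ X a ≤ hi} : ℝ) / Fintype.card Ω := by
  have hμ0 : 0 < μ := lt_of_lt_of_le (by positivity) hμ
  have hN : (0 : ℝ) < Fintype.card Ω := by exact_mod_cast Fintype.card_pos
  refine le_trans ?_ (one_sub_div_le_card_filter_div X (by positivity) hlo hhi)
  gcongr 1 - ?_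
  calc _ ≤ μ * Fintype.card Ω / ((κ * μ / (1 + κ)) ^ 2 * Fintype.card Ω) := by gcongr
    _ = μ / (κ * μ / (1 + κ)) ^ 2 := mul_div_mul_right _ _ hN.ne'
    _ ≤ _ := div_sq_le_exp_neg_of_le hκ hμ

end Chebyshev

lemma pivot_div_le_sub_and_add_le {κ pivot p : ℝ} (hκ : 0 < κ) (hpivot : 0 ≤ pivot) (hp0 : 0 ≤ p)
    (hp : p ≤ 1 / 2) :
    pivot / (1 + κ) ≤ (pivot + p) - κ * (pivot + p) / (1 + κ) ∧
      (pivot + p) + κ * (pivot + p) / (1 + κ) ≤ 1 + (1 + κ) * pivot := by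
  have hκ1 : 0 < 1 + κ := by linarith
  constructor
  · rw [div_le_iff₀ hκ1, sub_mul, div_mul_cancel₀ _ hκ1.ne']
    nlinarith
  · rw [add_div' _ _ _ hκ1.ne', div_le_iff₀ hκ1]
    nlinarith [mul_le_mul_of_nonneg_right hp (by positivity : (0 : ℝ) ≤ 1 + 2 * κ),
      mul_nonneg hpivot (sq_nonneg κ)]

theorem hashXor_cell_weight_success_general
    (n m : ℕ)
    (R : Finset (Fin n → ZMod 2)) (w : (Fin n → ZMod 2) → ℝ)
    (hw : ∀ z ∈ R, w z ∈ Set.Ioc (0 : ℝ) 1)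
    (κ : ℝ) (hκ0 : 0 < κ)
    (pivot : ℝ) (hpivot : pivot = (⌈Real.exp (3 / 2) * (1 + 1 / κ) ^ 2⌉ : ℝ))
    (hm : (∑ z ∈ R, w z) - 1 = (2 : ℝ) ^ m * pivot)
    (hbig : 1 + (1 + κ) * pivot < ∑ z ∈ R, w z)
    (α : Fin m → ZMod 2) :
    1 - Real.exp (-(3 / 2)) ≤
      ((Finset.univ.filter
          (fun a : Fin m → ZMod 2 × (Fin n → ZMod 2) =>
            pivot / (1 + κ) ≤ ∑ z ∈ R.filter (fun z => hashXor n m a z = α), w z ∧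
            (∑ z ∈ R.filter (fun z => hashXor n m a z = α), w z) ≤ 1 + (1 + κ) * pivot)).card : ℝ) /
        (Fintype.card (Fin m → ZMod 2 × (Fin n → ZMod 2)) : ℝ) := by
  have hpivot_le : Real.exp (3 / 2) * (1 + 1 / κ) ^ 2 ≤ pivot := hpivot ▸ Int.le_ceil _
  have hpivot_pos : 0 < pivot := lt_of_lt_of_le (by positivity) hpivot_le
  have hm0 : m ≠ 0 := by
    rintro rfl
    nlinarith
  have hp : ((2 : ℝ) ^ m)⁻¹ ≤ 1 / 2 := by
    rw [one_div]
    exact inv_anti₀ two_pos (le_self_pow₀ one_le_two hm0)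
  have hμ : ((2 : ℝ) ^ m)⁻¹ * ∑ z ∈ R, w z = pivot + ((2 : ℝ) ^ m)⁻¹ := by
    rw [show ∑ z ∈ R, w z = 1 + 2 ^ m * pivot by linarith]
    field_simp
    ring
  obtain ⟨hlo, hhi⟩ := pivot_div_le_sub_and_add_le hκ0 hpivot_pos.le (by positivity) hp
  rw [← hμ] at hlo hhi
  exact one_sub_exp_le_card_filter_div (hashCellWeight R w α) hκ0
    (hμ ▸ hpivot_le.trans (le_add_of_nonneg_right (by positivity)))
    (sum_sq_hashCellWeight_sub_le R w (fun z hz => Set.Ioc_subset_Icc_self (hw z hz)) α) hlo hhi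

/-- With `pivot = ⌈e^{3/2}·(1+1/κ)²⌉`, `w(R) − 1 = 2^m·pivot` and
`w(R) > 1 + (1+κ)·pivot`, a random XOR hash cell `R ∩ h⁻¹(α)` has weight in
`[pivot/(1+κ), 1+(1+κ)·pivot]` with probability at least `1 − e^{-3/2}`. -/
theorem hashXor_cell_weight_success
    (n m : ℕ) (hn : 1 ≤ n)
    (R : Finset (Fin n → ZMod 2)) (w : (Fin n → ZMod 2) → ℝ)
    (hw : ∀ z ∈ R, w z ∈ Set.Ioc (0 : ℝ) 1)
    (κ : ℝ) (hκ0 : 0 < κ) (hκ1 : κ < 1)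
    (pivot : ℝ) (hpivot : pivot = (⌈Real.exp (3 / 2) * (1 + 1 / κ) ^ 2⌉ : ℝ))
    (hm : (∑ z ∈ R, w z) - 1 = (2 : ℝ) ^ m * pivot)
    (hbig : 1 + (1 + κ) * pivot < ∑ z ∈ R, w z)
    (α : Fin m → ZMod 2) :
    1 - Real.exp (-(3 / 2)) ≤
      ((Finset.univ.filter
          (fun a : Fin m → ZMod 2 × (Fin n → ZMod 2) =>
            pivot / (1 + κ) ≤ ∑ z ∈ R.filter (fun z => hashXor n m a z = α), w z ∧
            (∑ z ∈ R.filter (fun z => hashXor n m a z = α), w z) ≤ 1 + (1 + κ) * pivot)).card : ℝ) /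
        (Fintype.card (Fin m → ZMod 2 × (Fin n → ZMod 2)) : ℝ) :=
  hashXor_cell_weight_success_general n m R w hw κ hκ0 pivot hpivot hm hbig α
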